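/- arXiv:2512.11411 — 7 statements merged into one kernel-verified Lean document; each statement's English description precedes it below -/
import Mathlib

section
/- Let x_1, …, x_n be pairwise distinct real numbers and let γ_1, …, γ_n be real numbers with Σ_{i=1}^n γ_i = 0. Then −Σ_{i=1}^n Σ_{j=1}^n γ_i γ_j · ReLU(x_i − x_j) ≥ 0, and equality holds if and only if γ_1 = γ_2 = … = γ_n = 0. (In other words, the asymmetric kernel (x, y) ↦ ReLU(x − y) is conditionally positive definite of order 1 on ℝ, strictly on distinct points.) -/
/-- `ReLU t = max t 0` on the reals. -/
noncomputable def ReLU (t : ℝ) : ℝ := max t 0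


lemma ReLU_of_nonneg {t : ℝ} (h : 0 ≤ t) : ReLU t = t := max_eq_left h
lemma ReLU_of_nonpos {t : ℝ} (h : t ≤ 0) : ReLU t = 0 := max_eq_right h

lemma quad_relu {ι : Type*} [DecidableEq ι] (x : ι → ℝ) :
    ∀ (s : Finset ι) (γ : ι → ℝ), Set.InjOn x s → ∑ i ∈ s, γ i = 0 →
    0 ≤ -∑ i ∈ s, ∑ j ∈ s, γ i * γ j * ReLU (x i - x j) ∧
      ((-∑ i ∈ s, ∑ j ∈ s, γ i * γ j * ReLU (x i - x j)) = 0 ↔ ∀ i ∈ s, γ i = 0) := by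
  intro s
  induction s using Finset.strongInduction with
  | _ s ih =>
  intro γ hx hγ
  rcases s.eq_empty_or_nonempty with rfl | hne
  · simp
  obtain ⟨i₀, hi₀s, hi₀max⟩ := s.exists_max_image x hne
  set s' := s.erase i₀ with hs'
  have hi₀not : i₀ ∉ s' := Finset.notMem_erase _ _
  have hins : insert i₀ s' = s := Finset.insert_erase hi₀s
  rcases s'.eq_empty_or_nonempty with hse | hne'
  · -- s = {i₀}
    have hs1 : s = {i₀} := by
      rw [← hins, hse]; rfl
    subst hs1
    have hγ0 : γ i₀ = 0 := by simpa using hγ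
    simp [hγ0]
  obtain ⟨i₁, hi₁s', hi₁max⟩ := s'.exists_max_image x hne'
  have hi₁s : i₁ ∈ s := Finset.mem_of_mem_erase hi₁s'
  have hlt : ∀ j ∈ s', x j < x i₀ := by
    intro j hj
    refine lt_of_le_of_ne (hi₀max j (Finset.mem_of_mem_erase hj)) ?_
    intro h
    exact (Finset.ne_of_mem_erase hj) (hx (Finset.mem_of_mem_erase hj) hi₀s h)
  have h01 : x i₁ < x i₀ := hlt i₁ hi₁s'
  -- sum over s' of γ
  have hγs : γ i₀ + ∑ i ∈ s', γ i = 0 := by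
    rw [← hγ, ← hins, Finset.sum_insert hi₀not]
  have hsum' : ∑ i ∈ s', γ i = -γ i₀ := by linarith
  -- new coefficients
  set γ' : ι → ℝ := Function.update γ i₁ (γ i₁ + γ i₀) with hγ'def
  have hγ'eq : ∀ i, γ' i = γ i + (if i = i₁ then γ i₀ else 0) := by
    intro i
    by_cases h : i = i₁ <;> simp [hγ'def, Function.update, h]
  have hγ'sum : ∑ i ∈ s', γ' i = 0 := by
    have : ∑ i ∈ s', γ' i = ∑ i ∈ s', (γ i + (if i = i₁ then γ i₀ else 0)) := by
      exact Finset.sum_congr rfl fun i _ => hγ'eq i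
    rw [this, Finset.sum_add_distrib, Finset.sum_ite_eq' s' i₁ (fun _ => γ i₀)]
    simp [hi₁s', hsum']
  have hsub : s' ⊂ s := Finset.erase_ssubset hi₀s
  have hx' : Set.InjOn x s' := hx.mono (fun a ha => Finset.mem_of_mem_erase ha)
  obtain ⟨IH1, IH2⟩ := ih s' hsub γ' hx' hγ'sum
  -- ReLU facts
  have R0 : ∀ j ∈ s, ReLU (x i₀ - x j) = x i₀ - x j := fun j hj =>
    ReLU_of_nonneg (by linarith [hi₀max j hj])
  have R0' : ∀ i ∈ s', ReLU (x i - x i₀) = 0 := fun i hi =>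
    ReLU_of_nonpos (by linarith [hlt i hi])
  have R1 : ∀ j ∈ s', ReLU (x i₁ - x j) = x i₁ - x j := fun j hj =>
    ReLU_of_nonneg (by linarith [hi₁max j hj])
  have R1' : ∀ i ∈ s', ReLU (x i - x i₁) = 0 := fun i hi =>
    ReLU_of_nonpos (by linarith [hi₁max i hi])
  set T := ∑ i ∈ s', ∑ j ∈ s', γ i * γ j * ReLU (x i - x j) with hT
  -- claim 1
  have claim1 : ∑ i ∈ s, ∑ j ∈ s, γ i * γ j * ReLU (x i - x j)
      = T + γ i₀ * ∑ j ∈ s', γ j * (x i₀ - x j) := by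
    rw [← hins, Finset.sum_insert hi₀not]
    have inner0 : ∑ j ∈ insert i₀ s', γ i₀ * γ j * ReLU (x i₀ - x j)
        = γ i₀ * ∑ j ∈ s', γ j * (x i₀ - x j) := by
      rw [Finset.sum_insert hi₀not, Finset.mul_sum]
      have : ReLU (x i₀ - x i₀) = 0 := by simp [ReLU]
      rw [this]
      ring_nf
      refine Finset.sum_congr rfl fun j hj => ?_
      rw [R0 j (Finset.mem_of_mem_erase hj)]; ring
    have inner : ∀ i ∈ s', ∑ j ∈ insert i₀ s', γ i * γ j * ReLU (x i - x j)
        = ∑ j ∈ s', γ i * γ j * ReLU (x i - x j) := by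
      intro i hi
      rw [Finset.sum_insert hi₀not, R0' i hi]
      ring_nf
    rw [inner0, Finset.sum_congr rfl inner]
    ring
  -- claim 2
  have claim2 : ∑ i ∈ s', ∑ j ∈ s', γ' i * γ' j * ReLU (x i - x j)
      = T + γ i₀ * ∑ j ∈ s', γ j * (x i₁ - x j) := by
    have expand : ∀ i ∈ s', ∀ j ∈ s', γ' i * γ' j * ReLU (x i - x j)
        = γ i * γ j * ReLU (x i - x j)
          + (if i = i₁ then γ i₀ * γ j * ReLU (x i - x j) else 0)
          + (if j = i₁ then γ i * γ i₀ * ReLU (x i - x j) else 0)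
          + (if i = i₁ then (if j = i₁ then γ i₀ * γ i₀ * ReLU (x i - x j) else 0) else 0) := by
      intro i _ j _
      rw [hγ'eq i, hγ'eq j]
      by_cases h1 : i = i₁ <;> by_cases h2 : j = i₁ <;> simp [h1, h2] <;> ring
    calc ∑ i ∈ s', ∑ j ∈ s', γ' i * γ' j * ReLU (x i - x j)
        = ∑ i ∈ s', ∑ j ∈ s', (γ i * γ j * ReLU (x i - x j)
          + (if i = i₁ then γ i₀ * γ j * ReLU (x i - x j) else 0)
          + (if j = i₁ then γ i * γ i₀ * ReLU (x i - x j) else 0)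
          + (if i = i₁ then (if j = i₁ then γ i₀ * γ i₀ * ReLU (x i - x j) else 0) else 0)) := by
          refine Finset.sum_congr rfl fun i hi => Finset.sum_congr rfl fun j hj => expand i hi j hj
      _ = T + γ i₀ * ∑ j ∈ s', γ j * (x i₁ - x j) := by
          have eB : ∀ i ∈ s', ∑ j ∈ s', (if i = i₁ then γ i₀ * γ j * ReLU (x i - x j) else 0)
              = if i = i₁ then γ i₀ * ∑ j ∈ s', γ j * (x i₁ - x j) else 0 := by
            intro i _
            by_cases h : i = i₁
            · simp only [if_pos h, h, if_true]
              rw [Finset.mul_sum]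
              exact Finset.sum_congr rfl fun j hj => by rw [R1 j hj]; ring
            · simp [h]
          have eC : ∀ i ∈ s', ∑ j ∈ s', (if j = i₁ then γ i * γ i₀ * ReLU (x i - x j) else 0)
              = 0 := by
            intro i hi
            rw [Finset.sum_ite_eq' s' i₁]
            simp [hi₁s', R1' i hi]
          have eD : ∀ i ∈ s', ∑ j ∈ s',
              (if i = i₁ then (if j = i₁ then γ i₀ * γ i₀ * ReLU (x i - x j) else 0) else 0)
              = 0 := by
            intro i hi
            by_cases h : i = i₁
            · simp only [if_pos h]
              rw [Finset.sum_ite_eq' s' i₁]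
              simp [hi₁s', R1' i hi]
            · simp [h]
          simp only [Finset.sum_add_distrib]
          rw [Finset.sum_congr rfl eB, Finset.sum_congr rfl eC, Finset.sum_congr rfl eD,
            Finset.sum_ite_eq' s' i₁]
          simp [hi₁s', hT]
  -- difference of the two linear parts
  have hdiff : γ i₀ * ∑ j ∈ s', γ j * (x i₀ - x j) - γ i₀ * ∑ j ∈ s', γ j * (x i₁ - x j)
      = -(γ i₀ ^ 2 * (x i₀ - x i₁)) := by
    have h1 : ∑ j ∈ s', γ j * (x i₀ - x j) - ∑ j ∈ s', γ j * (x i₁ - x j)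
        = (∑ j ∈ s', γ j) * (x i₀ - x i₁) := by
      rw [← Finset.sum_sub_distrib, Finset.sum_mul]
      refine Finset.sum_congr rfl fun j _ => by ring
    rw [hsum'] at h1
    linear_combination γ i₀ * h1
  have key : -∑ i ∈ s, ∑ j ∈ s, γ i * γ j * ReLU (x i - x j)
      = (-∑ i ∈ s', ∑ j ∈ s', γ' i * γ' j * ReLU (x i - x j)) + γ i₀ ^ 2 * (x i₀ - x i₁) := by
    rw [claim1, claim2]
    linarith [hdiff]
  constructor
  · rw [key]
    have : 0 ≤ γ i₀ ^ 2 * (x i₀ - x i₁) := mul_nonneg (sq_nonneg _) (by linarith)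
    linarith
  · constructor
    · intro h
      rw [key] at h
      have hnn : 0 ≤ γ i₀ ^ 2 * (x i₀ - x i₁) := mul_nonneg (sq_nonneg _) (by linarith)
      have hq0 : -∑ i ∈ s', ∑ j ∈ s', γ' i * γ' j * ReLU (x i - x j) = 0 := by linarith
      have hγ0 : γ i₀ = 0 := by
        have : γ i₀ ^ 2 * (x i₀ - x i₁) = 0 := by linarith
        have h2 : γ i₀ ^ 2 = 0 := by
          rcases mul_eq_zero.1 this with h | h
          · exact h
          · linarith
        exact pow_eq_zero_iff (n := 2) (by norm_num) |>.1 h2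
      have hall' := IH2.1 hq0
      intro i hi
      by_cases hii : i = i₀
      · rw [hii]; exact hγ0
      · have hi' : i ∈ s' := Finset.mem_erase.2 ⟨hii, hi⟩
        have := hall' i hi'
        rw [hγ'eq i] at this
        by_cases h1 : i = i₁
        · simp [h1, hγ0] at this ⊢
          linarith [this]
        · simpa [h1] using this
    · intro h
      have : ∀ i ∈ s, ∀ j ∈ s, γ i * γ j * ReLU (x i - x j) = 0 := by
        intro i hi j _
        rw [h i hi]; ring
      rw [Finset.sum_eq_zero fun i hi => Finset.sum_eq_zero fun j hj => this i hi j hj]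
      ring

/-- The asymmetric kernel `(x, y) ↦ ReLU (x - y)` is conditionally positive definite of
order 1 on `ℝ`, strictly on distinct points: for pairwise distinct `x i` and coefficients
`γ i` summing to zero, `-∑ i ∑ j γ i * γ j * ReLU (x i - x j) ≥ 0`, with equality iff
all coefficients vanish. -/
theorem relu_kernel_conditionally_positive_definite
    (n : ℕ) (x : Fin n → ℝ) (hx : Function.Injective x)
    (γ : Fin n → ℝ) (hγ : ∑ i, γ i = 0) :
    0 ≤ -∑ i, ∑ j, γ i * γ j * ReLU (x i - x j) ∧
      (-∑ i, ∑ j, γ i * γ j * ReLU (x i - x j) = 0 ↔ ∀ i, γ i = 0) := by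
  have h := quad_relu x Finset.univ γ (hx.injOn) hγ
  exact ⟨h.1, h.2.trans ⟨fun H i => H i (Finset.mem_univ i), fun H i _ => H i⟩⟩
end

section
/- Let N ≥ 1, let z_1 ≤ z_2 ≤ … ≤ z_N be a nondecreasing sequence of real numbers, and let γ_1, …, γ_N be vectors in ℝ^d. Then for every index i with 1 ≤ i ≤ N, Σ_{j=1}^N ReLU(z_i − z_j) · γ_j = z_i · (Σ_{j=1}^{i} γ_j) − Σ_{j=1}^{i} z_j · γ_j. (This prefix-sum identity is the core of the O(n log n) sliced computation of ReLU attention: after sorting, the full ReLU convolution reduces to cumulative sums a_i = Σ_{j≤i} γ_j and b_i = Σ_{j≤i} z_j γ_j, giving Σ_j ReLU(z_i − z_j) γ_j = a_i z_i − b_i.) -/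
/-- Prefix-sum identity underlying the `O(n log n)` sliced computation of ReLU attention:
if `z 1 ≤ … ≤ z N` is nondecreasing and `γ j ∈ ℝ^d`, then for every `i`,
`∑ j ReLU (z i - z j) • γ j = z i • (∑ j ≤ i, γ j) - ∑ j ≤ i, z j • γ j`. -/
theorem relu_attention_prefix_sum_identity
    (N d : ℕ) (hN : 1 ≤ N) (z : Fin N → ℝ) (hz : Monotone z)
    (γ : Fin N → EuclideanSpace ℝ (Fin d)) (i : Fin N) :
    ∑ j, ReLU (z i - z j) • γ j
      = z i • (∑ j ∈ Finset.Iic i, γ j) - ∑ j ∈ Finset.Iic i, z j • γ j := by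
  have h1 : ∑ j, ReLU (z i - z j) • γ j
      = ∑ j ∈ Finset.Iic i, ReLU (z i - z j) • γ j := by
    rw [← Finset.sum_subset (Finset.subset_univ (Finset.Iic i))]
    intro j _ hj
    have : z i ≤ z j := hz (le_of_lt (lt_of_not_ge (by simpa using hj)))
    have : ReLU (z i - z j) = 0 := by
      simp [ReLU, max_eq_right, sub_nonpos.mpr this]
    simp [this]
  rw [h1, Finset.smul_sum, ← Finset.sum_sub_distrib]
  apply Finset.sum_congr rfl
  intro j hj
  have hji : z j ≤ z i := hz (Finset.mem_Iic.mp hj)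
  have : ReLU (z i - z j) = z i - z j := by
    simp [ReLU, max_eq_left, sub_nonneg.mpr hji]
  rw [this, sub_smul]
end

section
/- Disentanglement in 1D: let p ≥ 1 and consider p sequences x_1, …, x_p, each x_i = (x_{i,1}, …, x_{i,n}) ∈ ℝ^n with pairwise distinct entries within each sequence, and such that the multisets of entries {x_{i,1}, …, x_{i,n}} are pairwise distinct across i. Then there exist L ≤ 2p − 1 1D ReLU attention layers (given by parameters (a_1, v_1), …, (a_L, v_L), each a_l : ℝ → ℝ affine and v_l ∈ ℝ) and p pairwise disjoint intervals I_1, …, I_p ⊂ ℝ, such that applying the layers successively — where at step l each sequence is updated using its own current entries as context, i.e. the k-th entry s_k of the current sequence is replaced by s_k + v_l · Σ_{m=1}^n ReLU(s_k − a_l(s_m)) — every entry of the final sequence obtained from x_i lies in I_i, for each i = 1, …, p. -/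
/-- A 1D ReLU attention layer with parameters a map `a : ℝ → ℝ` and `v : ℝ` sends the
sequence `s` to the sequence whose `k`-th entry is `s k + v * ∑ m ReLU (s k - a (s m))`. -/
noncomputable def reluLayer1d (n : ℕ) (a : ℝ → ℝ) (v : ℝ) (s : Fin n → ℝ) : Fin n → ℝ :=
  fun k => s k + v * ∑ m, ReLU (s k - a (s m))

/-- Successive application of a list of 1D ReLU attention layers (each given by an affine
map and a value weight), where at each step the current sequence is its own context. -/
noncomputable def applyReluLayers1d (n : ℕ) (layers : List ((ℝ → ℝ) × ℝ))
    (s : Fin n → ℝ) : Fin n → ℝ :=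
  layers.foldl (fun s l => reluLayer1d n l.1 l.2 s) s

lemma relu_of_le {t τ : ℝ} (h : t ≤ τ) : ReLU (t - τ) = 0 := by
  simp [ReLU, max_eq_right, sub_nonpos.2 h]

lemma relu_of_ge {t τ : ℝ} (h : τ ≤ t) : ReLU (t - τ) = t - τ := by
  simp [ReLU, max_eq_left, sub_nonneg.2 h]

lemma multiset_relu_sep (u w : Multiset ℝ) (h : u ≠ w) :
    ∃ τ : ℝ, ((u.map (fun t => ReLU (t - τ))).sum ≠ (w.map (fun t => ReLU (t - τ))).sum) := by
  classical
  have hex : ∃ a, u.count a ≠ w.count a := by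
    by_contra hc
    push_neg at hc
    exact h (Multiset.ext.2 hc)
  set F := (u + w).toFinset with hF
  have hFD : ∀ a, u.count a ≠ w.count a → a ∈ F := by
    intro a ha
    by_contra hn
    simp only [hF, Multiset.mem_toFinset, Multiset.mem_add, not_or] at hn
    rw [Multiset.count_eq_zero_of_notMem hn.1, Multiset.count_eq_zero_of_notMem hn.2] at ha
    exact ha rfl
  set D := F.filter (fun a => u.count a ≠ w.count a) with hDdef
  have hD : D.Nonempty := by
    obtain ⟨a, ha⟩ := hex
    exact ⟨a, Finset.mem_filter.2 ⟨hFD a ha, ha⟩⟩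
  set a := D.max' hD with ha_def
  have ha_count : u.count a ≠ w.count a := (Finset.mem_filter.1 (D.max'_mem hD)).2
  have hmax : ∀ x, a < x → u.count x = w.count x := by
    intro x hax
    by_contra hc
    exact absurd (D.le_max' x (Finset.mem_filter.2 ⟨hFD x hc, hc⟩)) (not_le.2 hax)
  -- choose τ
  obtain ⟨τ, hτa, hτgap⟩ : ∃ τ, τ < a ∧ ∀ x ∈ u + w, x < a → x ≤ τ := by
    by_cases hb : (F.filter (· < a)).Nonempty
    · set m := (F.filter (· < a)).max' hb with hm
      have hma : m < a := (Finset.mem_filter.1 ((F.filter (· < a)).max'_mem hb)).2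
      refine ⟨(m + a) / 2, by linarith, ?_⟩
      intro x hx hxa
      have hmem : x ∈ F.filter (· < a) := Finset.mem_filter.2 ⟨Multiset.mem_toFinset.2 hx, hxa⟩
      have : x ≤ m := Finset.le_max' _ x hmem
      linarith
    · refine ⟨a - 1, by linarith, ?_⟩
      intro x hx hxa
      have hmem : x ∈ F.filter (· < a) := Finset.mem_filter.2 ⟨Multiset.mem_toFinset.2 hx, hxa⟩
      exact absurd ⟨x, hmem⟩ hb
  refine ⟨τ, ?_⟩
  -- calculation of the sum for any multiset whose small elts are ≤ τ
  have hcalc : ∀ v : Multiset ℝ, (∀ x ∈ v, x < a → x ≤ τ) →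
      (v.map (fun t => ReLU (t - τ))).sum
        = (v.count a : ℝ) * (a - τ) + ((v.filter (a < ·)).map (fun t => t - τ)).sum := by
    intro v hv
    have hsplit : v.filter (a ≤ ·) = Multiset.replicate (v.count a) a + v.filter (a < ·) := by
      ext x
      rw [Multiset.count_add, Multiset.count_filter, Multiset.count_replicate,
        Multiset.count_filter]
      by_cases h1 : x = a
      · subst h1; simp
      · by_cases h2 : a < x
        · rw [if_pos h2.le, if_neg (fun hc : a = x => h1 hc.symm), if_pos h2, zero_add]
        · have hxa : ¬ a ≤ x := fun hc => h1 (le_antisymm hc (not_lt.1 h2)).symm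
          rw [if_neg hxa, if_neg (fun hc : a = x => h1 hc.symm), if_neg h2, add_zero]
    calc (v.map (fun t => ReLU (t - τ))).sum
        = ((v.filter (a ≤ ·)).map (fun t => ReLU (t - τ))).sum
          + ((v.filter (fun x => ¬ a ≤ x)).map (fun t => ReLU (t - τ))).sum := by
          rw [← Multiset.sum_add, ← Multiset.map_add, Multiset.filter_add_not]
      _ = ((v.filter (a ≤ ·)).map (fun t => ReLU (t - τ))).sum := by
          rw [add_eq_left]
          apply Multiset.sum_eq_zero
          intro y hy
          obtain ⟨x, hx, rfl⟩ := Multiset.mem_map.1 hy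
          have hx' := Multiset.mem_filter.1 hx
          exact relu_of_le (hv x hx'.1 (not_le.1 hx'.2))
      _ = (v.count a : ℝ) * (a - τ) + ((v.filter (a < ·)).map (fun t => t - τ)).sum := by
          rw [hsplit, Multiset.map_add, Multiset.sum_add]
          congr 1
          · rw [Multiset.map_replicate, relu_of_ge hτa.le, Multiset.sum_replicate,
              nsmul_eq_mul]
          · apply congrArg
            apply Multiset.map_congr rfl
            intro x hx
            exact relu_of_ge (le_of_lt (lt_trans hτa (Multiset.mem_filter.1 hx).2))
  have hufil : u.filter (a < ·) = w.filter (a < ·) := by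
    ext x
    rw [Multiset.count_filter, Multiset.count_filter]
    by_cases hax : a < x
    · rw [if_pos hax, if_pos hax, hmax x hax]
    · rw [if_neg hax, if_neg hax]
  rw [hcalc u (fun x hx => hτgap x (Multiset.mem_add.2 (Or.inl hx))),
    hcalc w (fun x hx => hτgap x (Multiset.mem_add.2 (Or.inr hx))), hufil]
  intro hEq
  have h2 : (u.count a : ℝ) * (a - τ) = (w.count a : ℝ) * (a - τ) := by linarith
  have h3 : (u.count a : ℝ) = (w.count a : ℝ) :=
    mul_right_cancel₀ (by linarith : a - τ ≠ 0) h2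
  exact ha_count (Nat.cast_injective h3)


lemma card_image_lt {p : ℕ} (f f' : Fin p → ℝ)
    (hker : ∀ a b : Fin p, f' a = f' b → f a = f b)
    {i j : Fin p} (hfij : f i = f j) (hfij' : f' i ≠ f' j) :
    (Finset.univ.image f).card < (Finset.univ.image f').card := by
  classical
  by_contra hc
  push_neg at hc
  set s := Finset.univ.image f' with hs
  set t := Finset.univ.image f with ht
  let F : (y : ℝ) → y ∈ s → ℝ := fun y hy => f (Finset.mem_image.1 hy).choose
  have hFa : ∀ (a : Fin p) (hy : f' a ∈ s), F (f' a) hy = f a := by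
    intro a hy
    exact hker _ _ (Finset.mem_image.1 hy).choose_spec.2
  have h1 : ∀ (y : ℝ) (hy : y ∈ s), F y hy ∈ t := by
    intro y hy
    exact Finset.mem_image.2 ⟨(Finset.mem_image.1 hy).choose, Finset.mem_univ _, rfl⟩
  have h2 : ∀ b ∈ t, ∃ y, ∃ (hy : y ∈ s), F y hy = b := by
    intro b hb
    obtain ⟨a, -, rfl⟩ := Finset.mem_image.1 hb
    refine ⟨f' a, Finset.mem_image.2 ⟨a, Finset.mem_univ _, rfl⟩, ?_⟩
    exact hFa a (Finset.mem_image.2 ⟨a, Finset.mem_univ _, rfl⟩)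
  have hinj := Finset.inj_on_of_surj_on_of_card_le F h1 h2 hc
  have hyi : f' i ∈ s := Finset.mem_image.2 ⟨i, Finset.mem_univ _, rfl⟩
  have hyj : f' j ∈ s := Finset.mem_image.2 ⟨j, Finset.mem_univ _, rfl⟩
  exact hfij' (hinj hyi hyj (by rw [hFa i hyi, hFa j hyj, hfij]))

lemma reluLayer_const {n : ℕ} (hn : 0 < n) (τ c : ℝ) (s : Fin n → ℝ) :
    reluLayer1d n (fun _ => τ) (c / n) s = fun k => s k + c * ReLU (s k - τ) := by
  funext k
  simp only [reluLayer1d, Finset.sum_const, Finset.card_univ, Fintype.card_fin, nsmul_eq_mul]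
  have hn0 : (n : ℝ) ≠ 0 := Nat.cast_ne_zero.2 hn.ne'
  field_simp

lemma sum_relu_eq_multiset (n : ℕ) (y : Fin n → ℝ) (τ : ℝ) :
    ((Multiset.map y Finset.univ.val).map (fun t => ReLU (t - τ))).sum
      = ∑ k, ReLU (y k - τ) := by
  rw [Multiset.map_map, Finset.sum_eq_multiset_sum]
  rfl

lemma kink_lemma (p n : ℕ) (hn : 0 < n) (e : ℕ) :
    ∀ (y : Fin p → Fin n → ℝ),
      (∀ i j, i ≠ j → Multiset.map (y i) Finset.univ.val ≠ Multiset.map (y j) Finset.univ.val) →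
      p - (Finset.univ.image (fun i => ∑ k, y i k)).card ≤ e →
      ∃ layers : List ((ℝ → ℝ) × ℝ),
        layers.length ≤ e ∧
        (∀ l ∈ layers, ∃ α β : ℝ, ∀ t, l.1 t = α * t + β) ∧
        ∀ i j, i ≠ j →
          (∑ k, applyReluLayers1d n layers (y i) k) ≠ (∑ k, applyReluLayers1d n layers (y j) k) := by
  classical
  induction e with
  | zero =>
    intro y hmult hcard
    refine ⟨[], le_rfl, by simp, ?_⟩
    have hle : (Finset.univ.image (fun i => ∑ k, y i k)).card ≤ p := by
      refine le_trans Finset.card_image_le ?_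
      simp
    have heq : (Finset.univ.image (fun i => ∑ k, y i k)).card = (Finset.univ : Finset (Fin p)).card := by
      simp only [Finset.card_univ, Fintype.card_fin]
      omega
    have hinj := Finset.card_image_iff.1 heq
    intro i j hij hSij
    simp only [applyReluLayers1d, List.foldl_nil] at hSij
    exact hij (hinj (Finset.mem_coe.2 (Finset.mem_univ i)) (Finset.mem_coe.2 (Finset.mem_univ j)) hSij)
  | succ e ih =>
    intro y hmult hcard
    by_cases hsep : ∀ i j : Fin p, i ≠ j → (∑ k, y i k) ≠ (∑ k, y j k)
    · refine ⟨[], Nat.zero_le _, by simp, ?_⟩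
      intro i j hij
      simp only [applyReluLayers1d, List.foldl_nil]
      exact hsep i j hij
    · push_neg at hsep
      obtain ⟨i, j, hij, hS⟩ := hsep
      set S : Fin p → ℝ := fun a => ∑ k, y a k with hSdef
      obtain ⟨τ, hτ⟩ := multiset_relu_sep _ _ (hmult i j hij)
      set g : Fin p → ℝ := fun a => ∑ k, ReLU (y a k - τ) with hgdef
      have hgij : g i ≠ g j := by
        intro hgg
        apply hτ
        rw [sum_relu_eq_multiset, sum_relu_eq_multiset]
        exact hgg
      set Bad : Finset ℝ :=
        Finset.image (fun ab : Fin p × Fin p => (S ab.2 - S ab.1) / (g ab.1 - g ab.2))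
          Finset.univ with hBad
      obtain ⟨c, hc0, hcB⟩ := (Set.Ioi_infinite (0:ℝ)).exists_notMem_finset Bad
      have hcpos : (0:ℝ) < c := hc0
      set ψ : ℝ → ℝ := fun t => t + c * ReLU (t - τ) with hψ
      have hψmono : StrictMono ψ := by
        have hmono : Monotone (fun t : ℝ => c * ReLU (t - τ)) := by
          apply Monotone.const_mul ?_ hcpos.le
          intro s t hst
          exact max_le_max (by simpa using hst) le_rfl
        exact strictMono_id.add_monotone hmono
      set z : Fin p → Fin n → ℝ := fun a k => ψ (y a k) with hz
      have hzlayer : ∀ a, reluLayer1d n (fun _ => τ) (c / n) (y a) = z a := by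
        intro a; rw [reluLayer_const hn]
      have hzmult : ∀ a b, a ≠ b →
          Multiset.map (z a) Finset.univ.val ≠ Multiset.map (z b) Finset.univ.val := by
        intro a b hab hmm
        apply hmult a b hab
        have hma : ∀ q : Fin p, Multiset.map (z q) Finset.univ.val
            = Multiset.map ψ (Multiset.map (y q) Finset.univ.val) := by
          intro q; rw [Multiset.map_map]; rfl
        rw [hma, hma] at hmm
        exact Multiset.map_injective hψmono.injective hmm
      have hzsum : ∀ a, (∑ k, z a k) = S a + c * g a := by
        intro a
        simp only [hz, hψ, hSdef, hgdef]
        rw [Finset.sum_add_distrib, Finset.mul_sum]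
      have hker : ∀ a b, (∑ k, z a k) = (∑ k, z b k) → S a = S b := by
        intro a b hzz
        by_contra hSab
        rw [hzsum, hzsum] at hzz
        have hgab : g a - g b ≠ 0 := by
          intro h0
          apply hSab
          have : g a = g b := by linarith
          rw [this] at hzz
          linarith
        apply hcB
        rw [hBad]
        refine Finset.mem_image.2 ⟨(a, b), Finset.mem_univ _, ?_⟩
        rw [div_eq_iff hgab]
        linarith
      have hznew : (∑ k, z i k) ≠ (∑ k, z j k) := by
        have hS' : S i = S j := hS
        rw [hzsum, hzsum, hS']
        intro hEq
        have hc0' : c * (g i - g j) = 0 := by linarith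
        rcases mul_eq_zero.1 hc0' with h | h
        · exact hcpos.ne' h
        · exact hgij (by linarith)
      have hcard2 := card_image_lt S (fun a => ∑ k, z a k) hker hS hznew
      have hcard3 : p - (Finset.univ.image (fun a => ∑ k, z a k)).card ≤ e := by omega
      obtain ⟨layers', hlen, haff, hfinal⟩ := ih z hzmult hcard3
      refine ⟨(fun _ => τ, c / n) :: layers', by simpa using hlen, ?_, ?_⟩
      · intro l hl
        rcases List.mem_cons.1 hl with rfl | hl'
        · exact ⟨0, τ, fun t => by simp⟩
        · exact haff l hl'
      · intro a b hab
        have happ : ∀ w, applyReluLayers1d n ((fun _ => τ, c / n) :: layers') w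
            = applyReluLayers1d n layers' (reluLayer1d n (fun _ => τ) (c / n) w) := fun w => rfl
        rw [happ, happ, hzlayer, hzlayer]
        exact hfinal a b hab

/-- Disentanglement in 1D: `p` sequences with pairwise distinct entries within each
sequence and pairwise distinct multisets of entries across sequences can be mapped, by at
most `2p - 1` successive 1D ReLU attention layers with affine projections, into `p`
pairwise disjoint intervals `I i`, the final sequence obtained from `x i` having all of
its entries in `I i`. -/
theorem relu_attention_disentanglement_1d
    (p n : ℕ) (hp : 1 ≤ p) (x : Fin p → Fin n → ℝ)
    (hinj : ∀ i, Function.Injective (x i))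
    (hdist : ∀ i j : Fin p, i ≠ j →
      Multiset.map (x i) Finset.univ.val ≠ Multiset.map (x j) Finset.univ.val) :
    ∃ (layers : List ((ℝ → ℝ) × ℝ)) (I : Fin p → Set ℝ),
      layers.length ≤ 2 * p - 1 ∧
      (∀ l ∈ layers, ∃ α β : ℝ, ∀ t, l.1 t = α * t + β) ∧
      (∀ i, (I i).OrdConnected) ∧
      (∀ i j : Fin p, i ≠ j → Disjoint (I i) (I j)) ∧
      (∀ i k, applyReluLayers1d n layers (x i) k ∈ I i) := by
  classical
  rcases Nat.lt_or_ge p 2 with hp2 | hp2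
  · -- p = 1
    have hp1 : p = 1 := by omega
    subst hp1
    refine ⟨[], fun _ => Set.univ, by simp, by simp, fun _ => Set.ordConnected_univ, ?_,
      fun i k => trivial⟩
    intro i j hij
    exact absurd (Subsingleton.elim i j) hij
  · -- p ≥ 2
    have hn' : 0 < n := by
      by_contra hc
      have hn0 : n = 0 := by omega
      subst hn0
      have h01 : (⟨0, by omega⟩ : Fin p) ≠ ⟨1, by omega⟩ := by
        intro h
        simpa using congrArg Fin.val h
      apply hdist _ _ h01
      simp
    have hn0 : (n : ℝ) ≠ 0 := Nat.cast_ne_zero.2 hn'.ne'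
    haveI : Nonempty (Fin p) := ⟨⟨0, by omega⟩⟩
    obtain ⟨layers₀, hlen₀, haff₀, hsums⟩ := kink_lemma p n hn' (p - 1) x hdist (by
      have hpos : 0 < (Finset.univ.image (fun i => ∑ k, x i k)).card := by
        apply Finset.card_pos.2
        exact (Finset.univ_nonempty).image _
      omega)
    set z : Fin p → Fin n → ℝ := fun i => applyReluLayers1d n layers₀ (x i) with hzdef
    haveI : Nonempty (Fin p × Fin n) := ⟨⟨⟨0, by omega⟩, ⟨0, hn'⟩⟩⟩
    obtain ⟨q0, hq0⟩ := Finite.exists_min (fun q : Fin p × Fin n => z q.1 q.2)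
    set β : ℝ := 2 * z q0.1 q0.2 - 1 with hβ
    have hβlt : ∀ i k m, (0:ℝ) < z i k + z i m - β := by
      intro i k m
      have h1 := hq0 (i, k)
      have h2 := hq0 (i, m)
      simp only [hβ]
      simp only at h1 h2
      linarith
    set v : ℝ := -(1 / n) with hv
    have hcol : ∀ i, reluLayer1d n (fun t => β - t) v (z i)
        = fun _ => β - (∑ m, z i m) / n := by
      intro i
      funext k
      simp only [reluLayer1d]
      have hsum : (∑ m, ReLU (z i k - (β - z i m)))
          = (n : ℝ) * (z i k - β) + ∑ m, z i m := by
        have h1 : (∑ m, ReLU (z i k - (β - z i m))) = ∑ m, ((z i k - β) + z i m) := by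
          apply Finset.sum_congr rfl
          intro m _
          have := hβlt i k m
          simp only [ReLU]
          rw [max_eq_left (by linarith)]
          ring
        rw [h1, Finset.sum_add_distrib, Finset.sum_const, Finset.card_univ,
          Fintype.card_fin, nsmul_eq_mul]
      rw [hsum, hv]
      field_simp
      ring
    set L : (ℝ → ℝ) × ℝ := (fun t => β - t, v) with hL
    refine ⟨layers₀ ++ [L], fun i => {β - (∑ m, z i m) / n}, ?_, ?_, ?_, ?_, ?_⟩
    · rw [List.length_append]
      simp only [List.length_singleton]
      omega
    · intro l hl
      rcases List.mem_append.1 hl with hl' | hl'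
      · exact haff₀ l hl'
      · have : l = L := by simpa using hl'
        subst this
        exact ⟨-1, β, fun t => by simp [hL]; ring⟩
    · intro i
      exact Set.ordConnected_singleton
    · intro i j hij
      rw [Set.disjoint_singleton]
      intro h
      apply hsums i j hij
      have h2 : (∑ m, z i m) / n = (∑ m, z j m) / n := by linarith
      field_simp at h2
      exact h2
    · intro i k
      have happ : applyReluLayers1d n (layers₀ ++ [L]) (x i)
          = reluLayer1d n L.1 L.2 (z i) := by
        simp only [applyReluLayers1d, List.foldl_append, List.foldl_cons, List.foldl_nil]
        rfl
      rw [happ]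
      simp only [hL]
      rw [hcol i]
      exact rfl
end

section
/- The elementary contextual maps separate points: let Ω ⊂ ℝ^d be compact, let x, x' ∈ Ω, and let μ, μ' be Borel probability measures on Ω. If γ_{a,b,c,v}(x, μ) = γ_{a,b,c,v}(x', μ') for every choice of parameters a ∈ ℝ^d and b, c, v ∈ ℝ, then x = x' and μ = μ'. -/
open MeasureTheory Filter
open scoped RealInnerProductSpace Topology NNReal ENNReal

/-- The elementary contextual map `γ_{a,b,c,v}(x, μ) = ⟨x, a⟩ + b +
v ∫ ReLU (⟨x, a⟩ - ⟨y, a⟩ + c) dμ(y)` on `Ω × P(Ω)`. -/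
noncomputable def gammaMap (d : ℕ) (Ω : Set (EuclideanSpace ℝ (Fin d)))
    (a : EuclideanSpace ℝ (Fin d)) (b c v : ℝ)
    (x : Ω) (μ : ProbabilityMeasure Ω) : ℝ :=
  ⟪(x : EuclideanSpace ℝ (Fin d)), a⟫ + b +
    v * ∫ y : Ω, ReLU (⟪(x : EuclideanSpace ℝ (Fin d)), a⟫
      - ⟪(y : EuclideanSpace ℝ (Fin d)), a⟫ + c) ∂(μ : Measure Ω)

section Aux

lemma gm_bound_aux (s t : ℝ) (n : ℕ) :
    ‖(n+1:ℝ) * (max (t + 1/(n+1) - s) 0 - max (t - s) 0)‖ ≤ 1 := by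
  have hn : (0:ℝ) < n + 1 := by positivity
  have h1 : |max (t + 1/(n+1) - s) 0 - max (t - s) 0| ≤ |(t + 1/(n+1) - s) - (t - s)| :=
    abs_max_sub_max_le_abs _ _ _
  have h2 : |(t + 1/(n+1) - s) - (t - s)| = 1/(n+1) := by
    rw [show (t + 1/(n+1) - s) - (t - s) = 1/(n+1:ℝ) by ring, abs_of_pos (by positivity)]
  rw [Real.norm_eq_abs, abs_mul, abs_of_pos hn]
  calc (n+1:ℝ) * |max (t + 1/(n+1) - s) 0 - max (t - s) 0|
      ≤ (n+1:ℝ) * (1/(n+1)) := by nlinarith [h1, h2]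
    _ = 1 := by field_simp

lemma gm_tendsto_aux (s t : ℝ) :
    Tendsto (fun n : ℕ => (n+1:ℝ) * (max (t + 1/(n+1) - s) 0 - max (t - s) 0)) atTop
      (𝓝 (if s ≤ t then (1:ℝ) else 0)) := by
  by_cases h : s ≤ t
  · simp only [h, if_true]
    have : ∀ n : ℕ, (n+1:ℝ) * (max (t + 1/(n+1) - s) 0 - max (t - s) 0) = 1 := by
      intro n
      have hn : (0:ℝ) < 1/(n+1) := by positivity
      rw [max_eq_left (by linarith), max_eq_left (by linarith)]
      field_simp; ring
    simp only [this]; exact tendsto_const_nhds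
  · push_neg at h
    simp only [if_neg (not_le.mpr h)]
    have : ∀ᶠ n : ℕ in atTop, (n+1:ℝ) * (max (t + 1/(n+1) - s) 0 - max (t - s) 0) = 0 := by
      obtain ⟨N, hN⟩ := exists_nat_gt (1/(s - t))
      filter_upwards [eventually_ge_atTop N] with n hn
      have h1 : 1/(n+1:ℝ) < s - t := by
        rw [div_lt_iff₀ (by positivity)]
        have : 1/(s-t) < (n:ℝ) + 1 := lt_of_lt_of_le hN (by exact_mod_cast by linarith)
        calc (1:ℝ) = (s-t) * (1/(s-t)) := by
              rw [mul_one_div, div_self (by linarith : s-t ≠ 0)]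
          _ < (s-t) * ((n:ℝ)+1) := by apply mul_lt_mul_of_pos_left this (by linarith)
      rw [max_eq_right (by linarith), max_eq_right (by linarith)]
      ring
    exact Tendsto.congr' (this.mono fun n h => h.symm) tendsto_const_nhds

lemma gm_cont_int {X : Type*} [MeasurableSpace X] [TopologicalSpace X] [CompactSpace X]
    [OpensMeasurableSpace X] [T2Space X] {E : Type*} [NormedAddCommGroup E]
    (μ : Measure X) [IsFiniteMeasure μ] {f : X → E}
    (hf : Continuous f) : Integrable f μ :=
  hf.integrable_of_hasCompactSupport (HasCompactSupport.of_compactSpace f)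

lemma gm_tendsto_halfspace {X : Type*} [MeasurableSpace X] [TopologicalSpace X] [CompactSpace X]
    [OpensMeasurableSpace X] [T2Space X] (ν : Measure X) [IsFiniteMeasure ν]
    {ℓ : X → ℝ} (hℓ : Continuous ℓ) (t : ℝ) :
    Tendsto (fun n : ℕ => ∫ y, (n+1:ℝ) * (max (t + 1/(n+1) - ℓ y) 0 - max (t - ℓ y) 0) ∂ν)
      atTop (𝓝 ((ν {y | ℓ y ≤ t}).toReal)) := by
  have hs : MeasurableSet {y | ℓ y ≤ t} := measurableSet_le hℓ.measurable measurable_const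
  have key : Tendsto (fun n : ℕ => ∫ y, (n+1:ℝ) * (max (t + 1/(n+1) - ℓ y) 0 - max (t - ℓ y) 0) ∂ν)
      atTop (𝓝 (∫ y, Set.indicator {y | ℓ y ≤ t} (fun _ => (1:ℝ)) y ∂ν)) := by
    apply tendsto_integral_of_dominated_convergence (fun _ => (1:ℝ))
    · intro n
      exact (Continuous.aestronglyMeasurable (by
        exact continuous_const.mul (((continuous_const.sub hℓ).max continuous_const).sub
          ((continuous_const.sub hℓ).max continuous_const))))
    · exact integrable_const 1
    · intro n
      exact Filter.Eventually.of_forall fun y => gm_bound_aux (ℓ y) t n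
    · apply Filter.Eventually.of_forall
      intro y
      have := gm_tendsto_aux (ℓ y) t
      rw [Set.indicator_apply]
      simpa only [Set.mem_setOf_eq] using this
  rwa [integral_indicator_const (1:ℝ) hs, smul_eq_mul, mul_one] at key

lemma gm_integral_ofReal {X : Type*} [MeasurableSpace X] (ν : MeasureTheory.Measure X)
    (f : X → ℝ) : ∫ x, ((f x : ℝ) : ℂ) ∂ν = ((∫ x, f x ∂ν : ℝ) : ℂ) := integral_ofReal

end Aux

/-- The elementary contextual maps separate points of `Ω × P(Ω)`: if all elementary maps
agree on `(x, μ)` and `(x', μ')`, then `x = x'` and `μ = μ'`. -/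
theorem gammaMap_separates_points
    (d : ℕ) (Ω : Set (EuclideanSpace ℝ (Fin d))) (hΩ : IsCompact Ω)
    (x x' : Ω) (μ μ' : ProbabilityMeasure Ω)
    (h : ∀ (a : EuclideanSpace ℝ (Fin d)) (b c v : ℝ),
      gammaMap d Ω a b c v x μ = gammaMap d Ω a b c v x' μ') :
    x = x' ∧ μ = μ' := by
  haveI : CompactSpace Ω := isCompact_iff_compactSpace.mp hΩ
  -- Step 1: x = x'
  have hinner : ∀ a : EuclideanSpace ℝ (Fin d), ⟪(x : EuclideanSpace ℝ (Fin d)), a⟫ = ⟪(x' : EuclideanSpace ℝ (Fin d)), a⟫ := by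
    intro a
    have := h a 0 0 0
    simpa [gammaMap] using this
  have hx : x = x' := by
    have h0 : ⟪(x : EuclideanSpace ℝ (Fin d)) - (x' : EuclideanSpace ℝ (Fin d)), (x : EuclideanSpace ℝ (Fin d)) - (x' : EuclideanSpace ℝ (Fin d))⟫ = 0 := by
      rw [inner_sub_left, hinner, ← inner_sub_left, sub_self, inner_zero_left]
    have := inner_self_eq_zero.mp h0
    exact Subtype.ext (sub_eq_zero.mp this)
  subst hx
  refine ⟨rfl, ?_⟩
  -- Step 2: the ridge integrals agree
  have hcont : ∀ a : EuclideanSpace ℝ (Fin d), Continuous (fun y : Ω => ⟪(y : EuclideanSpace ℝ (Fin d)), a⟫) := fun a =>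
    continuous_subtype_val.inner continuous_const
  have key : ∀ (a : EuclideanSpace ℝ (Fin d)) (t : ℝ),
      ∫ y : Ω, max (t - ⟪(y : EuclideanSpace ℝ (Fin d)), a⟫) 0 ∂(μ : Measure Ω)
        = ∫ y : Ω, max (t - ⟪(y : EuclideanSpace ℝ (Fin d)), a⟫) 0 ∂(μ' : Measure Ω) := by
    intro a t
    have := h a 0 (t - ⟪(x : EuclideanSpace ℝ (Fin d)), a⟫) 1
    simp only [gammaMap, one_mul, ReLU] at this
    have heq : ∀ y : Ω, ⟪(x : EuclideanSpace ℝ (Fin d)), a⟫ - ⟪(y : EuclideanSpace ℝ (Fin d)), a⟫ + (t - ⟪(x : EuclideanSpace ℝ (Fin d)), a⟫)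
        = t - ⟪(y : EuclideanSpace ℝ (Fin d)), a⟫ := fun y => by ring
    simp only [heq] at this
    linarith
  -- Step 3: halfspace measures agree
  have hhalf : ∀ (a : EuclideanSpace ℝ (Fin d)) (t : ℝ),
      (μ : Measure Ω) {y : Ω | ⟪(y : EuclideanSpace ℝ (Fin d)), a⟫ ≤ t} = (μ' : Measure Ω) {y : Ω | ⟪(y : EuclideanSpace ℝ (Fin d)), a⟫ ≤ t} := by
    intro a t
    have hInt : ∀ (ν : Measure Ω) (_ : IsFiniteMeasure ν) (u : ℝ),
        Integrable (fun y : Ω => max (u - ⟪(y : EuclideanSpace ℝ (Fin d)), a⟫) 0) ν := fun ν hν u =>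
      gm_cont_int ν ((continuous_const.sub (hcont a)).max continuous_const)
    have hseq : ∀ n : ℕ,
        ∫ y : Ω, (n+1:ℝ) * (max (t + 1/(n+1) - ⟪(y : EuclideanSpace ℝ (Fin d)), a⟫) 0 - max (t - ⟪(y : EuclideanSpace ℝ (Fin d)), a⟫) 0)
            ∂(μ : Measure Ω)
          = ∫ y : Ω, (n+1:ℝ) * (max (t + 1/(n+1) - ⟪(y : EuclideanSpace ℝ (Fin d)), a⟫) 0 - max (t - ⟪(y : EuclideanSpace ℝ (Fin d)), a⟫) 0)
            ∂(μ' : Measure Ω) := by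
      intro n
      rw [integral_const_mul, integral_const_mul,
        integral_sub (hInt _ inferInstance _) (hInt _ inferInstance _),
        integral_sub (hInt _ inferInstance _) (hInt _ inferInstance _),
        key a (t + 1/(n+1)), key a t]
    have t1 := gm_tendsto_halfspace (μ : Measure Ω) (hcont a) t
    have t2 := gm_tendsto_halfspace (μ' : Measure Ω) (hcont a) t
    rw [show (fun n : ℕ => ∫ y, (n+1:ℝ) * (max (t + 1/(n+1) - ⟪(y : EuclideanSpace ℝ (Fin d)), a⟫) 0
        - max (t - ⟪(y : EuclideanSpace ℝ (Fin d)), a⟫) 0) ∂(μ : Measure Ω))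
      = (fun n : ℕ => ∫ y, (n+1:ℝ) * (max (t + 1/(n+1) - ⟪(y : EuclideanSpace ℝ (Fin d)), a⟫) 0
        - max (t - ⟪(y : EuclideanSpace ℝ (Fin d)), a⟫) 0) ∂(μ' : Measure Ω)) from funext hseq] at t1
    have := tendsto_nhds_unique t1 t2
    exact (ENNReal.toReal_eq_toReal_iff' (measure_ne_top _ _) (measure_ne_top _ _)).mp this
  -- Step 4: one-dimensional pushforwards agree, hence integrals of g ∘ ⟪·,a⟫ agree
  have hpush : ∀ (a : EuclideanSpace ℝ (Fin d)) (g : ℝ → ℝ), Continuous g →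
      ∫ y : Ω, g ⟪(y : EuclideanSpace ℝ (Fin d)), a⟫ ∂(μ : Measure Ω) = ∫ y : Ω, g ⟪(y : EuclideanSpace ℝ (Fin d)), a⟫ ∂(μ' : Measure Ω) := by
    intro a g hg
    have hm : Measurable (fun y : Ω => ⟪(y : EuclideanSpace ℝ (Fin d)), a⟫) := (hcont a).measurable
    haveI : IsProbabilityMeasure ((μ : Measure Ω).map (fun y : Ω => ⟪(y : EuclideanSpace ℝ (Fin d)), a⟫)) :=
      Measure.isProbabilityMeasure_map hm.aemeasurable
    haveI : IsProbabilityMeasure ((μ' : Measure Ω).map (fun y : Ω => ⟪(y : EuclideanSpace ℝ (Fin d)), a⟫)) :=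
      Measure.isProbabilityMeasure_map hm.aemeasurable
    have hmapeq : (μ : Measure Ω).map (fun y : Ω => ⟪(y : EuclideanSpace ℝ (Fin d)), a⟫)
        = (μ' : Measure Ω).map (fun y : Ω => ⟪(y : EuclideanSpace ℝ (Fin d)), a⟫) := by
      apply MeasureTheory.Measure.ext_of_Iic
      intro t
      rw [Measure.map_apply hm measurableSet_Iic, Measure.map_apply hm measurableSet_Iic]
      exact hhalf a t
    calc ∫ y : Ω, g ⟪(y : EuclideanSpace ℝ (Fin d)), a⟫ ∂(μ : Measure Ω)
        = ∫ s : ℝ, g s ∂((μ : Measure Ω).map (fun y : Ω => ⟪(y : EuclideanSpace ℝ (Fin d)), a⟫)) := by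
          rw [integral_map hm.aemeasurable hg.aestronglyMeasurable]
      _ = ∫ s : ℝ, g s ∂((μ' : Measure Ω).map (fun y : Ω => ⟪(y : EuclideanSpace ℝ (Fin d)), a⟫)) := by rw [hmapeq]
      _ = ∫ y : Ω, g ⟪(y : EuclideanSpace ℝ (Fin d)), a⟫ ∂(μ' : Measure Ω) := by
          rw [integral_map hm.aemeasurable hg.aestronglyMeasurable]
  -- Step 5: complex exponential integrals agree
  classical
  have hexpint : ∀ (a : EuclideanSpace ℝ (Fin d)),
      ∫ y : Ω, Complex.exp (⟪(y : EuclideanSpace ℝ (Fin d)), a⟫ * Complex.I) ∂(μ : Measure Ω)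
        = ∫ y : Ω, Complex.exp (⟪(y : EuclideanSpace ℝ (Fin d)), a⟫ * Complex.I)
            ∂(μ' : Measure Ω) := by
    intro a
    have hsplit : ∀ (ν : Measure Ω), IsFiniteMeasure ν →
        ∫ y : Ω, Complex.exp (⟪(y : EuclideanSpace ℝ (Fin d)), a⟫ * Complex.I) ∂ν
          = ((∫ y : Ω, Real.cos ⟪(y : EuclideanSpace ℝ (Fin d)), a⟫ ∂ν : ℝ) : ℂ)
            + ((∫ y : Ω, Real.sin ⟪(y : EuclideanSpace ℝ (Fin d)), a⟫ ∂ν : ℝ) : ℂ)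
              * Complex.I := by
      intro ν hν
      have h1 : Integrable (fun y : Ω =>
          ((Real.cos ⟪(y : EuclideanSpace ℝ (Fin d)), a⟫ : ℝ) : ℂ)) ν :=
        gm_cont_int ν (Complex.continuous_ofReal.comp (Real.continuous_cos.comp (hcont a)))
      have h2 : Integrable (fun y : Ω =>
          ((Real.sin ⟪(y : EuclideanSpace ℝ (Fin d)), a⟫ : ℝ) : ℂ) * Complex.I) ν :=
        ((Complex.continuous_ofReal.comp
          (Real.continuous_sin.comp (hcont a))).mul continuous_const : Continuous _) |>
          gm_cont_int ν
      calc ∫ y : Ω, Complex.exp (⟪(y : EuclideanSpace ℝ (Fin d)), a⟫ * Complex.I) ∂ν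
          = ∫ y : Ω, (((Real.cos ⟪(y : EuclideanSpace ℝ (Fin d)), a⟫ : ℝ) : ℂ)
              + ((Real.sin ⟪(y : EuclideanSpace ℝ (Fin d)), a⟫ : ℝ) : ℂ) * Complex.I) ∂ν := by
            congr 1
            funext y
            rw [Complex.exp_mul_I, Complex.ofReal_cos, Complex.ofReal_sin]
        _ = _ := by
            rw [integral_add h1 h2, integral_mul_const, gm_integral_ofReal, gm_integral_ofReal]
    rw [hsplit _ inferInstance, hsplit _ inferInstance,
      hpush a Real.cos Real.continuous_cos, hpush a Real.sin Real.continuous_sin]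
  -- Step 6: all continuous complex functions integrate equally, by Stone-Weierstrass
  let expCM : EuclideanSpace ℝ (Fin d) → C(Ω, ℂ) := fun a =>
    ⟨fun y => Complex.exp (⟪(y : EuclideanSpace ℝ (Fin d)), a⟫ * Complex.I),
      Complex.continuous_exp.comp ((Complex.continuous_ofReal.comp (hcont a)).mul
        continuous_const)⟩
  have expCM_mul : ∀ a b, expCM a * expCM b = expCM (a + b) := by
    intro a b
    ext y
    simp only [expCM, ContinuousMap.mul_apply, ContinuousMap.coe_mk]
    rw [← Complex.exp_add, inner_add_right, Complex.ofReal_add]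
    ring_nf
  have expCM_star : ∀ a, star (expCM a) = expCM (-a) := by
    intro a
    ext y
    simp only [expCM, ContinuousMap.star_apply, ContinuousMap.coe_mk]
    rw [inner_neg_right, Complex.star_def, ← Complex.exp_conj, map_mul, Complex.conj_ofReal,
      Complex.conj_I, Complex.ofReal_neg]
    ring_nf
  have expCM_one : expCM 0 = 1 := by
    ext y
    simp [expCM, inner_zero_right]
  set S : Set C(Ω, ℂ) := Set.range expCM with hS
  set sp : Submodule ℂ C(Ω, ℂ) := Submodule.span ℂ S with hsp
  have h1mem : (1 : C(Ω, ℂ)) ∈ sp :=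
    Submodule.subset_span ⟨0, expCM_one⟩
  have hmulmem : ∀ f g : C(Ω, ℂ), f ∈ sp → g ∈ sp → f * g ∈ sp := by
    intro f g hf hg
    have : f * g ∈ sp * sp := Submodule.mul_mem_mul hf hg
    rw [hsp, Submodule.span_mul_span] at this
    refine Submodule.span_le.mpr ?_ this
    rintro w ⟨u, ⟨au, rfl⟩, v, ⟨av, rfl⟩, rfl⟩
    exact Submodule.subset_span ⟨au + av, (expCM_mul au av).symm⟩
  let Asub : Subalgebra ℂ C(Ω, ℂ) := sp.toSubalgebra h1mem hmulmem
  have hstarmem : ∀ f : C(Ω, ℂ), f ∈ Asub → star f ∈ Asub := by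
    intro f hf
    refine Submodule.span_induction ?_ ?_ ?_ ?_ hf
    · rintro w ⟨aw, rfl⟩
      rw [expCM_star]
      exact Submodule.subset_span ⟨-aw, rfl⟩
    · simp only [star_zero]
      exact Submodule.zero_mem sp
    · intro u v _ _ hu hv
      rw [star_add]
      exact Submodule.add_mem sp hu hv
    · intro c u _ hu
      rw [star_smul]
      exact Submodule.smul_mem sp _ hu
  let A : StarSubalgebra ℂ C(Ω, ℂ) := { Asub with star_mem' := fun hf => hstarmem _ hf }
  have hsep : A.SeparatesPoints := by
    intro y z hyz
    have hv : (y : EuclideanSpace ℝ (Fin d)) - (z : EuclideanSpace ℝ (Fin d)) ≠ 0 := by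
      intro hc
      exact hyz (Subtype.ext (sub_eq_zero.mp hc))
    set v : EuclideanSpace ℝ (Fin d) :=
      (y : EuclideanSpace ℝ (Fin d)) - (z : EuclideanSpace ℝ (Fin d)) with hvdef
    set a : EuclideanSpace ℝ (Fin d) := (Real.pi / ‖v‖ ^ 2) • v with hadef
    have hdiff : ⟪(y : EuclideanSpace ℝ (Fin d)), a⟫
        = ⟪(z : EuclideanSpace ℝ (Fin d)), a⟫ + Real.pi := by
      have hnorm : ‖v‖ ^ 2 ≠ 0 := by
        simpa using (norm_ne_zero_iff.mpr hv)
      have : ⟪v, a⟫ = Real.pi := by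
        rw [hadef, real_inner_smul_right, real_inner_self_eq_norm_sq]
        field_simp
      rw [hvdef, inner_sub_left] at this
      linarith
    refine ⟨_, ⟨expCM a, ?_, rfl⟩, ?_⟩
    · exact Submodule.subset_span ⟨a, rfl⟩
    · simp only [expCM, ContinuousMap.coe_mk]
      rw [hdiff, Complex.ofReal_add, add_mul, Complex.exp_add]
      intro hc
      have h1 : Complex.exp ((Real.pi : ℂ) * Complex.I) = -1 := Complex.exp_pi_mul_I
      rw [h1, mul_neg_one] at hc
      have := Complex.exp_ne_zero ((⟪(z : EuclideanSpace ℝ (Fin d)), a⟫ : ℝ) * Complex.I)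
      apply this
      have h2 : (2 : ℂ) * Complex.exp ((⟪(z : EuclideanSpace ℝ (Fin d)), a⟫ : ℝ) * Complex.I)
          = 0 := by linear_combination -hc
      rcases mul_eq_zero.mp h2 with h0 | h0
      · norm_num at h0
      · exact h0
  have hAint : ∀ f : C(Ω, ℂ), f ∈ A →
      ∫ y : Ω, f y ∂(μ : Measure Ω) = ∫ y : Ω, f y ∂(μ' : Measure Ω) := by
    intro f hf
    refine Submodule.span_induction ?_ ?_ ?_ ?_ hf
    · rintro w ⟨aw, rfl⟩
      exact hexpint aw
    · simp
    · intro u v _ _ hu hv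
      have hiu : ∀ ν : Measure Ω, IsFiniteMeasure ν → Integrable (fun y : Ω => u y) ν :=
        fun ν _ => gm_cont_int ν u.continuous
      have hiv : ∀ ν : Measure Ω, IsFiniteMeasure ν → Integrable (fun y : Ω => v y) ν :=
        fun ν _ => gm_cont_int ν v.continuous
      simp only [ContinuousMap.add_apply]
      rw [integral_add (hiu _ inferInstance) (hiv _ inferInstance),
        integral_add (hiu _ inferInstance) (hiv _ inferInstance), hu, hv]
    · intro c u _ hu
      simp only [ContinuousMap.smul_apply]
      rw [integral_smul, integral_smul, hu]
  have hcontint : ∀ ν : Measure Ω, IsProbabilityMeasure ν →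
      Continuous (fun f : C(Ω, ℂ) => ∫ y : Ω, f y ∂ν) := by
    intro ν hν
    apply (lipschitzWith_iff_dist_le_mul.mpr ?_).continuous (K := 1)
    intro f g
    rw [dist_eq_norm, ← integral_sub (gm_cont_int ν f.continuous) (gm_cont_int ν g.continuous)]
    have : ∀ y : Ω, ‖f y - g y‖ ≤ dist f g := by
      intro y
      rw [← dist_eq_norm]
      exact ContinuousMap.dist_apply_le_dist y
    calc ‖∫ y : Ω, (f y - g y) ∂ν‖ ≤ dist f g * (ν Set.univ).toReal :=
          norm_integral_le_of_norm_le_const (Filter.Eventually.of_forall this)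
      _ = 1 * dist f g := by simp [hν.measure_univ]
  have hall : ∀ f : C(Ω, ℂ), ∫ y : Ω, f y ∂(μ : Measure Ω) = ∫ y : Ω, f y ∂(μ' : Measure Ω) := by
    have hM : IsClosed {f : C(Ω, ℂ) |
        ∫ y : Ω, f y ∂(μ : Measure Ω) = ∫ y : Ω, f y ∂(μ' : Measure Ω)} :=
      isClosed_eq (hcontint _ inferInstance) (hcontint _ inferInstance)
    have htop := ContinuousMap.starSubalgebra_topologicalClosure_eq_top_of_separatesPoints A hsep
    intro f
    have hfA : f ∈ A.topologicalClosure := by rw [htop]; trivial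
    have hsub : closure (A : Set C(Ω, ℂ)) ⊆ {f : C(Ω, ℂ) |
        ∫ y : Ω, f y ∂(μ : Measure Ω) = ∫ y : Ω, f y ∂(μ' : Measure Ω)} :=
      closure_minimal (fun g hg => hAint g hg) hM
    exact hsub hfA
  -- Step 7: conclude μ = μ'
  apply ProbabilityMeasure.toMeasure_injective
  apply MeasureTheory.ext_of_forall_lintegral_eq_of_IsFiniteMeasure
  intro f
  have hco : Continuous (fun y : Ω => ((f y : ℝ) : ℂ)) :=
    Complex.continuous_ofReal.comp (NNReal.continuous_coe.comp f.continuous)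
  have hre : Continuous (fun y : Ω => ((f y : ℝ))) :=
    NNReal.continuous_coe.comp f.continuous
  have := hall ⟨fun y => ((f y : ℝ) : ℂ), hco⟩
  simp only [ContinuousMap.coe_mk] at this
  rw [gm_integral_ofReal, gm_integral_ofReal] at this
  have hreq : ∫ y : Ω, ((f y : ℝ)) ∂(μ : Measure Ω) = ∫ y : Ω, ((f y : ℝ)) ∂(μ' : Measure Ω) :=
    Complex.ofReal_inj.mp this
  rw [lintegral_coe_eq_integral _ (gm_cont_int _ hre), lintegral_coe_eq_integral _ (gm_cont_int _ hre),
    hreq]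
end

section
/- One-dimensional injectivity of the ReLU moment transform: let μ and μ' be Borel probability measures on ℝ whose supports are contained in a compact set Ω ⊂ ℝ. If ∫ ReLU(t − y) dμ(y) = ∫ ReLU(t − y) dμ'(y) for every t ∈ ℝ, then μ = μ'. -/
open MeasureTheory Filter Set Topology

lemma relu_integrable (μ : Measure ℝ) [IsProbabilityMeasure μ] (Ω : Set ℝ) (hΩ : IsCompact Ω)
    (hμ : μ Ωᶜ = 0) (s : ℝ) : Integrable (fun y => ReLU (s - y)) μ := by
  obtain ⟨r, hr⟩ := hΩ.isBounded.subset_closedBall 0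
  refine (integrable_const (|s| + r)).mono' ?_ ?_
  · exact ((continuous_const.sub continuous_id).max continuous_const).aestronglyMeasurable
  · have hae : ∀ᵐ y ∂μ, y ∈ Ω := by
      rw [ae_iff]
      exact hμ
    filter_upwards [hae] with y hy
    have hy' : |y| ≤ r := by
      have := hr hy
      simpa [Metric.mem_closedBall, Real.dist_eq] using this
    have h1 : ‖ReLU (s - y)‖ ≤ |s - y| := by
      rw [ReLU, Real.norm_eq_abs]
      rcases le_total (s - y) 0 with hc | hc
      · simp [max_eq_right hc]
      · rw [max_eq_left hc]
    calc ‖ReLU (s - y)‖ ≤ |s - y| := h1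
      _ ≤ |s| + |y| := abs_sub _ _
      _ ≤ |s| + r := by linarith

lemma key (μ : Measure ℝ) [IsProbabilityMeasure μ] (Ω : Set ℝ) (hΩ : IsCompact Ω)
    (hμ : μ Ωᶜ = 0) (t : ℝ) :
    Tendsto (fun n : ℕ => ((n : ℝ) + 1) *
        ((∫ y, ReLU (t + 1 / ((n : ℝ) + 1) - y) ∂μ) - ∫ y, ReLU (t - y) ∂μ))
      atTop (𝓝 (μ (Iic t)).toReal) := by
  set g : ℕ → ℝ → ℝ := fun n y =>
    ((n : ℝ) + 1) * (ReLU (t + 1 / ((n : ℝ) + 1) - y) - ReLU (t - y)) with hg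
  have hpos : ∀ n : ℕ, (0 : ℝ) < (n : ℝ) + 1 := fun n => by positivity
  have hint : Tendsto (fun n : ℕ => ∫ y, g n y ∂μ) atTop
      (𝓝 (∫ y, (Iic t).indicator (fun _ => (1 : ℝ)) y ∂μ)) := by
    apply tendsto_integral_of_dominated_convergence (fun _ => (1 : ℝ))
    · intro n
      exact ((continuous_const.mul (((continuous_const.sub continuous_id).max
        continuous_const).sub ((continuous_const.sub continuous_id).max
        continuous_const)))).aestronglyMeasurable
    · exact integrable_const 1
    · intro n
      refine ae_of_all _ fun y => ?_
      have hlip : |ReLU (t + 1 / ((n : ℝ) + 1) - y) - ReLU (t - y)| ≤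
          |(t + 1 / ((n : ℝ) + 1) - y) - (t - y)| := abs_max_sub_max_le_abs _ _ 0
      have h2 : |(t + 1 / ((n : ℝ) + 1) - y) - (t - y)| = 1 / ((n : ℝ) + 1) := by
        rw [show (t + 1 / ((n : ℝ) + 1) - y) - (t - y) = 1 / ((n : ℝ) + 1) by ring]
        exact abs_of_pos (by positivity)
      have : ‖g n y‖ = ((n : ℝ) + 1) * |ReLU (t + 1 / ((n : ℝ) + 1) - y) - ReLU (t - y)| := by
        rw [hg]
        simp [abs_mul, abs_of_pos (hpos n)]
      rw [this]
      calc ((n : ℝ) + 1) * |ReLU (t + 1 / ((n : ℝ) + 1) - y) - ReLU (t - y)|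
          ≤ ((n : ℝ) + 1) * (1 / ((n : ℝ) + 1)) := by
            apply mul_le_mul_of_nonneg_left _ (hpos n).le
            exact hlip.trans_eq h2
        _ = 1 := mul_one_div_cancel (hpos n).ne'
    · refine ae_of_all _ fun y => ?_
      rcases le_or_gt y t with hy | hy
      · have : ∀ n : ℕ, g n y = 1 := by
          intro n
          have h1 : (0 : ℝ) ≤ t - y := by linarith
          have h2 : (0 : ℝ) ≤ t + 1 / ((n : ℝ) + 1) - y := by
            have := (hpos n)
            have : (0:ℝ) < 1 / ((n : ℝ) + 1) := by positivity
            linarith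
          rw [hg]
          simp only [ReLU, max_eq_left h1, max_eq_left h2]
          field_simp
          ring
        rw [indicator_of_mem (Set.mem_Iic.mpr hy)]
        simp [this]
      · rw [indicator_of_notMem (by simpa using hy)]
        have hev : ∀ᶠ n : ℕ in atTop, g n y = 0 := by
          have htend : Tendsto (fun n : ℕ => 1 / ((n : ℝ) + 1)) atTop (𝓝 0) :=
            tendsto_one_div_add_atTop_nhds_zero_nat
          have : ∀ᶠ n : ℕ in atTop, 1 / ((n : ℝ) + 1) < y - t :=
            htend.eventually (eventually_lt_nhds (by linarith))
          filter_upwards [this] with n hn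
          have h1 : t - y ≤ 0 := by linarith
          have h2 : t + 1 / ((n : ℝ) + 1) - y ≤ 0 := by linarith
          rw [hg]
          simp only [ReLU]
          rw [max_eq_right h1, max_eq_right h2]
          ring
        exact tendsto_const_nhds.congr' (hev.mono fun n hn => hn.symm)
  have hval : (∫ y, (Iic t).indicator (fun _ => (1 : ℝ)) y ∂μ) = (μ (Iic t)).toReal := by
    rw [integral_indicator_const _ measurableSet_Iic]
    simp
    rfl
  have heq : ∀ n : ℕ, (∫ y, g n y ∂μ) = ((n : ℝ) + 1) *
      ((∫ y, ReLU (t + 1 / ((n : ℝ) + 1) - y) ∂μ) - ∫ y, ReLU (t - y) ∂μ) := by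
    intro n
    rw [hg]
    simp only
    rw [integral_const_mul, integral_sub (relu_integrable μ Ω hΩ hμ _)
      (relu_integrable μ Ω hΩ hμ _)]
  rw [← hval]
  exact hint.congr fun n => heq n

/-- One-dimensional injectivity of the ReLU moment transform: two Borel probability
measures on `ℝ`, both concentrated on a compact set `Ω`, having the same ReLU moments
`t ↦ ∫ ReLU (t - y) dμ(y)` must coincide. -/
theorem relu_moment_transform_injective
    (μ μ' : Measure ℝ) [IsProbabilityMeasure μ] [IsProbabilityMeasure μ']
    (Ω : Set ℝ) (hΩ : IsCompact Ω) (hμ : μ Ωᶜ = 0) (hμ' : μ' Ωᶜ = 0)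
    (h : ∀ t : ℝ, ∫ y, ReLU (t - y) ∂μ = ∫ y, ReLU (t - y) ∂μ') :
    μ = μ' := by
  apply Measure.ext_of_Iic
  intro t
  have h1 := key μ Ω hΩ hμ t
  have h2 := key μ' Ω hΩ hμ' t
  have h3 : (fun n : ℕ => ((n : ℝ) + 1) *
      ((∫ y, ReLU (t + 1 / ((n : ℝ) + 1) - y) ∂μ) - ∫ y, ReLU (t - y) ∂μ)) =
      (fun n : ℕ => ((n : ℝ) + 1) *
      ((∫ y, ReLU (t + 1 / ((n : ℝ) + 1) - y) ∂μ') - ∫ y, ReLU (t - y) ∂μ')) := by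
    funext n
    rw [h, h]
  rw [h3] at h1
  have := tendsto_nhds_unique h1 h2
  exact (ENNReal.toReal_eq_toReal_iff' (measure_ne_top μ _) (measure_ne_top μ' _)).mp this
end

section
/- Projection step of the contextual separation argument: let Ω ⊂ ℝ^d be compact and let μ, μ' be Borel probability measures on Ω. Fix x ∈ ℝ^d and a ∈ ℝ^d. If ∫_Ω ReLU(⟨a, x − y⟩ + c) dμ(y) = ∫_Ω ReLU(⟨a, x − y⟩ + c) dμ'(y) for every c ∈ ℝ, then the pushforward measures of μ and μ' under the linear map P_a : z ↦ ⟨z, a⟩ coincide: P_a # μ = P_a # μ'. -/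
open MeasureTheory
open scoped RealInnerProductSpace

lemma relu_step_bounds (b ε t : ℝ) (hε : 0 ≤ ε) :
    0 ≤ max (b + ε - t) 0 - max (b - t) 0 ∧ max (b + ε - t) 0 - max (b - t) 0 ≤ ε := by
  constructor
  · have := max_le_max (by linarith : b - t ≤ b + ε - t) (le_refl (0:ℝ))
    linarith
  · have h2 : max (b + ε - t) 0 ≤ max (b - t) 0 + ε :=
      max_le (by nlinarith [le_max_left (b - t) (0:ℝ)])
        (by nlinarith [le_max_right (b - t) (0:ℝ)])
    linarith

/-- Projection step of the contextual separation argument: if two Borel probability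
measures on a compact `Ω ⊂ ℝ^d` give the same integrals
`∫ ReLU (⟨a, x - y⟩ + c) dμ(y)` for every shift `c ∈ ℝ`, then their pushforwards under
the projection `P_a : z ↦ ⟨z, a⟩` coincide. -/
theorem relu_projection_pushforward_eq
    (d : ℕ) (Ω : Set (EuclideanSpace ℝ (Fin d))) (hΩ : IsCompact Ω)
    (μ μ' : ProbabilityMeasure Ω)
    (x a : EuclideanSpace ℝ (Fin d))
    (h : ∀ c : ℝ,
      ∫ y : Ω, ReLU (⟪a, x - (y : EuclideanSpace ℝ (Fin d))⟫ + c) ∂(μ : Measure Ω)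
        = ∫ y : Ω, ReLU (⟪a, x - (y : EuclideanSpace ℝ (Fin d))⟫ + c) ∂(μ' : Measure Ω)) :
    Measure.map (fun z : Ω => ⟪(z : EuclideanSpace ℝ (Fin d)), a⟫) (μ : Measure Ω)
      = Measure.map (fun z : Ω => ⟪(z : EuclideanSpace ℝ (Fin d)), a⟫) (μ' : Measure Ω) := by
  classical
  haveI : CompactSpace Ω := isCompact_iff_compactSpace.mp hΩ
  set g : Ω → ℝ := fun z => ⟪(z : EuclideanSpace ℝ (Fin d)), a⟫ with hg_def
  have hg : Continuous g := continuous_subtype_val.inner continuous_const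
  -- the hypothesis in terms of `g`
  have hF : ∀ b : ℝ,
      ∫ y, max (b - g y) 0 ∂(μ : Measure Ω) = ∫ y, max (b - g y) 0 ∂(μ' : Measure Ω) := by
    intro b
    have hfun : ∀ y : Ω,
        ReLU (⟪a, x - (y : EuclideanSpace ℝ (Fin d))⟫ + (b - ⟪a, x⟫)) = max (b - g y) 0 := by
      intro y
      have h1 : ⟪a, x - (y : EuclideanSpace ℝ (Fin d))⟫ = ⟪a, x⟫ - ⟪a, (y : EuclideanSpace ℝ (Fin d))⟫ := inner_sub_right a x y
      have h2 : g y = ⟪a, (y : EuclideanSpace ℝ (Fin d))⟫ := real_inner_comm _ _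
      rw [ReLU, h1, h2]
      ring_nf
    have := h (b - ⟪a, x⟫)
    simpa only [hfun] using this
  -- integrability of the truncation functions
  have hint : ∀ (c : ℝ) (ν : Measure Ω) [IsFiniteMeasure ν],
      Integrable (fun y => max (c - g y) 0) ν := fun c ν _ =>
    ((continuous_const.sub hg).max continuous_const).integrable_of_hasCompactSupport (μ := ν)
      (HasCompactSupport.of_compactSpace _)
  -- approximating sequence for the indicator of {g ≤ b}
  have key : ∀ b : ℝ, (μ : Measure Ω) (g ⁻¹' Set.Iic b) = (μ' : Measure Ω) (g ⁻¹' Set.Iic b) := by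
    intro b
    set φ : ℕ → Ω → ℝ := fun n y =>
      (max (b + 1 / (n + 1) - g y) 0 - max (b - g y) 0) * (n + 1) with hφ_def
    have hmeas : MeasurableSet (g ⁻¹' Set.Iic b) := hg.measurable measurableSet_Iic
    -- dominated convergence applied to both measures
    have hDCT : ∀ (ν : Measure Ω) [IsProbabilityMeasure ν],
        Filter.Tendsto (fun n => ∫ y, φ n y ∂ν) Filter.atTop
          (nhds ((ν (g ⁻¹' Set.Iic b)).toReal)) := by
      intro ν _
      have hind : ∫ y, (g ⁻¹' Set.Iic b).indicator (fun _ => (1:ℝ)) y ∂ν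
          = (ν (g ⁻¹' Set.Iic b)).toReal := by
        exact integral_indicator_one (μ := ν) hmeas
      rw [← hind]
      apply tendsto_integral_of_dominated_convergence (fun _ => (1:ℝ))
      · intro n
        exact ((((continuous_const.sub hg).max continuous_const).sub
          ((continuous_const.sub hg).max continuous_const)).mul
          continuous_const).aestronglyMeasurable
      · exact integrable_const 1
      · intro n
        refine Filter.Eventually.of_forall fun y => ?_
        have hε : (0:ℝ) < 1 / (n + 1) := by positivity
        obtain ⟨h0, h1⟩ := relu_step_bounds b (1 / (n + 1)) (g y) hε.le
        have hn : (0:ℝ) < (n:ℝ) + 1 := by positivity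
        have : |φ n y| = (max (b + 1 / (n + 1) - g y) 0 - max (b - g y) 0) * (n + 1) := by
          rw [abs_of_nonneg]
          positivity
        rw [Real.norm_eq_abs, this]
        calc (max (b + 1 / (n + 1) - g y) 0 - max (b - g y) 0) * ((n:ℝ) + 1)
            ≤ (1 / ((n:ℝ) + 1)) * ((n:ℝ) + 1) := by
              exact mul_le_mul_of_nonneg_right h1 hn.le
          _ = 1 := by field_simp
      · refine Filter.Eventually.of_forall fun y => ?_
        by_cases hy : g y ≤ b
        · have : ∀ n : ℕ, φ n y = 1 := by
            intro n
            have hε : (0:ℝ) < 1 / ((n:ℝ) + 1) := by positivity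
            have h1 : max (b + 1 / (n + 1) - g y) 0 = b + 1 / (n + 1) - g y :=
              max_eq_left (by linarith)
            have h2 : max (b - g y) 0 = b - g y := max_eq_left (by linarith)
            show (max (b + 1 / (n + 1) - g y) 0 - max (b - g y) 0) * ((n:ℝ) + 1) = 1
            rw [h1, h2]
            have hn : ((n:ℝ) + 1) ≠ 0 := by positivity
            field_simp
            ring
          simp only [this, Set.indicator_of_mem (show y ∈ g ⁻¹' Set.Iic b from hy)]
          exact tendsto_const_nhds
        · have hy' : b < g y := lt_of_not_ge hy
          have hev : ∀ᶠ n : ℕ in Filter.atTop, φ n y = 0 := by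
            have hto : Filter.Tendsto (fun n : ℕ => 1 / ((n:ℝ) + 1)) Filter.atTop (nhds 0) :=
              tendsto_one_div_add_atTop_nhds_zero_nat
            have : ∀ᶠ n : ℕ in Filter.atTop, 1 / ((n:ℝ) + 1) < g y - b :=
              hto.eventually (eventually_lt_nhds (by linarith : (0:ℝ) < g y - b))
            filter_upwards [this] with n hn
            have h1 : max (b + 1 / (n + 1) - g y) 0 = 0 := max_eq_right (by linarith)
            have h2 : max (b - g y) 0 = 0 := max_eq_right (by linarith)
            show (max (b + 1 / (n + 1) - g y) 0 - max (b - g y) 0) * ((n:ℝ) + 1) = 0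
            rw [h1, h2]; ring
          have hmem : y ∉ g ⁻¹' Set.Iic b := hy
          have : (g ⁻¹' Set.Iic b).indicator (fun _ => (1:ℝ)) y = 0 :=
            Set.indicator_of_notMem hmem _
          rw [this]
          exact Filter.Tendsto.congr' (hev.mono fun n hn => hn.symm) tendsto_const_nhds
    -- the integrals of φ n agree for μ and μ'
    have hφeq : ∀ n : ℕ, ∫ y, φ n y ∂(μ : Measure Ω) = ∫ y, φ n y ∂(μ' : Measure Ω) := by
      intro n
      have hcalc : ∀ (ν : Measure Ω) [IsFiniteMeasure ν],
          ∫ y, φ n y ∂ν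
            = ((∫ y, max (b + 1 / (n + 1) - g y) 0 ∂ν) - ∫ y, max (b - g y) 0 ∂ν) * (n + 1) := by
        intro ν _
        rw [hφ_def]
        rw [integral_mul_const, integral_sub (hint _ ν) (hint _ ν)]
      rw [hcalc (μ : Measure Ω), hcalc (μ' : Measure Ω), hF, hF]
    have h1 := hDCT (μ : Measure Ω)
    have h2 := hDCT (μ' : Measure Ω)
    rw [funext hφeq] at h1
    have htoReal := tendsto_nhds_unique h1 h2
    exact (ENNReal.toReal_eq_toReal_iff' (measure_ne_top _ _) (measure_ne_top _ _)).mp htoReal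
  -- conclude via uniqueness of measures from their CDFs
  haveI h1 : IsProbabilityMeasure (Measure.map g (μ : Measure Ω)) :=
    Measure.isProbabilityMeasure_map hg.measurable.aemeasurable
  haveI h2 : IsProbabilityMeasure (Measure.map g (μ' : Measure Ω)) :=
    Measure.isProbabilityMeasure_map hg.measurable.aemeasurable
  refine Measure.ext_of_Iic _ _ fun b => ?_
  rw [Measure.map_apply hg.measurable measurableSet_Iic,
    Measure.map_apply hg.measurable measurableSet_Iic]
  exact key b
end

section
/- Strict positivity on the zero-sum subspace (centered-value justification): let x_1, …, x_n be pairwise distinct real numbers. The symmetric bilinear form on ℝ^n defined by B(γ, γ') := −Σ_{i=1}^n Σ_{j=1}^n γ_i γ'_j · ReLU(x_i − x_j) is positive definite when restricted to the hyperplane {γ ∈ ℝ^n : Σ_{i=1}^n γ_i = 0}: for every γ in this hyperplane with γ ≠ 0 one has B(γ, γ) > 0. -/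
open MeasureTheory

/-- Strict positivity on the zero-sum subspace: for pairwise distinct real numbers
`x 1, …, x n`, the bilinear form `B (γ, γ') = -∑ i ∑ j γ i * γ' j * ReLU (x i - x j)`
is positive definite on the hyperplane `{γ : ∑ i γ i = 0}`: every nonzero `γ` in this
hyperplane satisfies `B (γ, γ) > 0`. -/
theorem relu_kernel_posdef_on_zero_sum_hyperplane
    (n : ℕ) (x : Fin n → ℝ) (hx : Function.Injective x)
    (B : (Fin n → ℝ) → (Fin n → ℝ) → ℝ)
    (hB : ∀ γ γ' : Fin n → ℝ, B γ γ' = -∑ i, ∑ j, γ i * γ' j * ReLU (x i - x j))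
    (γ : Fin n → ℝ) (hγ : ∑ i, γ i = 0) (hγ0 : γ ≠ 0) :
    0 < B γ γ := by
  classical
  set g : ℝ → ℝ := fun t => ∑ i, γ i * (Set.Iio (x i)).indicator 1 t with hg
  -- pointwise identity
  have key : ∀ t : ℝ, (g t) ^ 2
      = ∑ i, ∑ j, (Set.Ico (x j) (x i)).indicator (fun _ => -(γ i * γ j)) t := by
    intro t
    have hcompl : ∀ a : ℝ, (Set.Ici a).indicator (1 : ℝ → ℝ) t
        = 1 - (Set.Iio a).indicator 1 t := by
      intro a
      by_cases h : t < a
      · simp [Set.indicator_apply, h, not_le.mpr h]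
      · simp [Set.indicator_apply, h, not_lt.mp h]
    have hneg : (∑ j, γ j * (Set.Ici (x j)).indicator 1 t) = - g t := by
      simp only [hcompl, mul_sub, mul_one, Finset.sum_sub_distrib, hγ, hg]
      ring
    have hprod : ∀ i j : Fin n, (Set.Ico (x j) (x i)).indicator (fun _ => -(γ i * γ j)) t
        = -((γ i * (Set.Iio (x i)).indicator 1 t) * (γ j * (Set.Ici (x j)).indicator 1 t)) := by
      intro i j
      have : Set.Ico (x j) (x i) = Set.Iio (x i) ∩ Set.Ici (x j) := by
        ext s; simp [Set.mem_Ico, and_comm]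
      rw [this]
      by_cases ha : t ∈ Set.Iio (x i) <;> by_cases hb : t ∈ Set.Ici (x j) <;>
        simp [Set.indicator_apply, ha, hb, Set.mem_inter_iff] <;> ring
    calc (g t) ^ 2 = -(g t * (- g t)) := by ring
    _ = -(g t * ∑ j, γ j * (Set.Ici (x j)).indicator 1 t) := by rw [hneg]
    _ = -(∑ i, ∑ j, (γ i * (Set.Iio (x i)).indicator 1 t) * (γ j * (Set.Ici (x j)).indicator 1 t)) := by
        rw [hg, Finset.sum_mul_sum]
    _ = ∑ i, ∑ j, (Set.Ico (x j) (x i)).indicator (fun _ => -(γ i * γ j)) t := by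
        rw [← Finset.sum_neg_distrib]
        refine Finset.sum_congr rfl fun i _ => ?_
        rw [← Finset.sum_neg_distrib]
        exact Finset.sum_congr rfl fun j _ => (hprod i j).symm
  -- integrability of the summands
  have hIntij : ∀ i j : Fin n,
      Integrable ((Set.Ico (x j) (x i)).indicator (fun _ => -(γ i * γ j)) : ℝ → ℝ) := by
    intro i j
    refine (integrable_indicator_iff measurableSet_Ico).mpr ?_
    exact (integrableOn_const_iff (C := -(γ i * γ j))).mpr (Or.inr (by rw [Real.volume_Ico]; exact ENNReal.ofReal_lt_top))
  -- B γ γ equals the integral of g^2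
  have hBint : B γ γ = ∫ t, (g t) ^ 2 := by
    have h1 : ∫ t, (g t) ^ 2
        = ∑ i, ∑ j, ∫ t, (Set.Ico (x j) (x i)).indicator (fun _ => -(γ i * γ j)) t := by
      simp only [key]
      rw [integral_finset_sum _ (fun i _ => integrable_finset_sum _ (fun j _ => hIntij i j))]
      exact Finset.sum_congr rfl fun i _ => integral_finset_sum _ (fun j _ => hIntij i j)
    have h2 : ∀ i j : Fin n,
        ∫ t, (Set.Ico (x j) (x i)).indicator (fun _ => -(γ i * γ j)) t
          = -(γ i * γ j * ReLU (x i - x j)) := by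
      intro i j
      rw [integral_indicator_const _ measurableSet_Ico, Real.volume_real_Ico,
        smul_eq_mul]
      simp only [ReLU]
      ring
    rw [hB, h1]
    simp only [h2, Finset.sum_neg_distrib]
  -- positivity
  rw [hBint]
  have hnn : (0 : ℝ → ℝ) ≤ fun t => (g t) ^ 2 := fun t => sq_nonneg _
  have hint : Integrable (fun t => (g t) ^ 2) := by
    have : (fun t => (g t) ^ 2)
        = fun t => ∑ i, ∑ j, (Set.Ico (x j) (x i)).indicator (fun _ => -(γ i * γ j)) t := by
      funext t; exact key t
    rw [this]
    exact integrable_finset_sum _ (fun i _ => integrable_finset_sum _ (fun j _ => hIntij i j))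
  rw [integral_pos_iff_support_of_nonneg hnn hint]
  -- find an interval where g is nonzero
  set S : Finset (Fin n) := Finset.univ.filter (fun i => γ i ≠ 0) with hS
  have hSne : S.Nonempty := by
    by_contra h
    apply hγ0
    funext i
    show γ i = (0 : Fin n → ℝ) i
    by_contra hi
    exact h ⟨i, Finset.mem_filter.mpr ⟨Finset.mem_univ i, by simpa using hi⟩⟩
  obtain ⟨i0, hi0S, hi0max⟩ := Finset.exists_max_image S x hSne
  have hγi0 : γ i0 ≠ 0 := by simpa [hS] using hi0S
  have hS'ne : (S.erase i0).Nonempty := by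
    by_contra h
    rw [Finset.not_nonempty_iff_eq_empty, Finset.erase_eq_empty_iff] at h
    rcases h with h | h
    · exact absurd h (Finset.nonempty_iff_ne_empty.mp hSne)
    · apply hγi0
      have : ∑ i ∈ S, γ i = ∑ i, γ i := Finset.sum_filter_ne_zero _
      rw [h, Finset.sum_singleton, hγ] at this
      exact this
  obtain ⟨j1, hj1S', hj1max⟩ := Finset.exists_max_image (S.erase i0) x hS'ne
  have hj1ne : j1 ≠ i0 := Finset.ne_of_mem_erase hj1S'
  have hj1lt : x j1 < x i0 := by
    have hle := hi0max j1 (Finset.mem_of_mem_erase hj1S')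
    exact lt_of_le_of_ne hle (fun h => hj1ne (hx h))
  have hsub : Set.Ioo (x j1) (x i0) ⊆ Function.support (fun t => (g t) ^ 2) := by
    intro t ht
    obtain ⟨ht1, ht2⟩ := ht
    have hgt : g t = γ i0 := by
      show (∑ i, γ i * (Set.Iio (x i)).indicator 1 t) = γ i0
      rw [Finset.sum_eq_single i0]
      · simp [Set.indicator_apply, Set.mem_Iio.mpr ht2, ht2]
      · intro i _ hi
        by_cases hγi : γ i = 0
        · simp [hγi]
        · have hiS' : i ∈ S.erase i0 := Finset.mem_erase.mpr ⟨hi, by simp [hS, hγi]⟩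
          have : x i ≤ x j1 := hj1max i hiS'
          have : ¬ t < x i := not_lt.mpr (this.trans ht1.le)
          simp [Set.indicator_apply, this]
      · intro h; exact absurd (Finset.mem_univ i0) h
    simp [Function.mem_support, hgt, pow_eq_zero_iff, hγi0]
  calc (0 : ENNReal) < volume (Set.Ioo (x j1) (x i0)) := by
        rw [Real.volume_Ioo]
        exact ENNReal.ofReal_pos.mpr (sub_pos.mpr hj1lt)
  _ ≤ volume (Function.support fun t => (g t) ^ 2) := measure_mono hsub
end
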